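/- Let p, q ≥ 1, N = p + q, and let (t_i, a_i)_{i=1}^r be a good parameter satisfying the nonvanishing condition, such that the number of elements of ν_j lying in ν_{<j} is strictly less than q_j and the number of elements of ν_j lying in ν_{>j} is strictly less than p_j. Write ν_j = {ν_{j,1}, …, ν_{j,a_j}} with ν_{j,1} > … > ν_{j,a_j}. Then there exists an integer i_0 with 1 ≤ i_0 ≤ a_j such that a_j − i_0 + 1 + #{x ∈ ν_{<j} ⊔ ν_{>j} : x > ν_{j,i_0}} = p, where the elements of the multiset ν_{<j} ⊔ ν_{>j} are counted with multiplicity. -/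
import Mathlib


open Finset

/-- The multiset `P(λ) = {λ_i − (N−1)/2 + (p−i) : 1 ≤ i ≤ p}` of rationals,
for `N = p + q` and a weight `λ : ℕ → ℤ` (1-based indexing). -/
def Pms (p q : ℕ) (lam : ℕ → ℤ) : Multiset ℚ :=
  (Finset.Icc 1 p).val.map
    (fun i => (lam i : ℚ) - ((p : ℚ) + (q : ℚ) - 1) / 2 + ((p : ℚ) - (i : ℚ)))

/-- The multiset `Q(λ) = {λ_{p+i} + (N−1)/2 − (i−1) : 1 ≤ i ≤ q}`. -/
def Qms (p q : ℕ) (lam : ℕ → ℤ) : Multiset ℚ :=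
  (Finset.Icc 1 q).val.map
    (fun i => (lam (p + i) : ℚ) + ((p : ℚ) + (q : ℚ) - 1) / 2 - ((i : ℚ) - 1))

/-- Dominance: `λ_1 ≥ … ≥ λ_p` and `λ_{p+1} ≥ … ≥ λ_{p+q}`. -/
def Dominant (p q : ℕ) (lam : ℕ → ℤ) : Prop :=
  (∀ i, 1 ≤ i → i < p → lam (i + 1) ≤ lam i) ∧
  (∀ i, p + 1 ≤ i → i < p + q → lam (i + 1) ≤ lam i)

/-- `p' = #{i : 1 ≤ i ≤ p, λ_i = λ_p}`. -/
def pPrime (p : ℕ) (lam : ℕ → ℤ) : ℕ :=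
  ((Finset.Icc 1 p).filter (fun i => lam i = lam p)).card

/-- `q' = #{i : p+1 ≤ i ≤ p+q, λ_i = λ_{p+1}}`. -/
def qPrime (p q : ℕ) (lam : ℕ → ℤ) : ℕ :=
  ((Finset.Icc (p + 1) (p + q)).filter (fun i => lam i = lam (p + 1))).card

/-- The segment `P' = {λ_p − (N−1)/2 + k : 0 ≤ k ≤ p'−1}`. -/
def Pseg (p q : ℕ) (lam : ℕ → ℤ) : Finset ℚ :=
  (Finset.range (pPrime p lam)).image
    (fun k : ℕ => (lam p : ℚ) - ((p : ℚ) + (q : ℚ) - 1) / 2 + (k : ℚ))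

/-- The segment `Q' = {λ_{p+1} + (N−1)/2 − k : 0 ≤ k ≤ q'−1}`. -/
def Qseg (p q : ℕ) (lam : ℕ → ℤ) : Finset ℚ :=
  (Finset.range (qPrime p q lam)).image
    (fun k : ℕ => (lam (p + 1) : ℚ) + ((p : ℚ) + (q : ℚ) - 1) / 2 - (k : ℚ))

/-- `I = P' ∩ Q'`. -/
def Iseg (p q : ℕ) (lam : ℕ → ℤ) : Finset ℚ := Pseg p q lam ∩ Qseg p q lam

/-- A good parameter `(t_1,a_1),…,(t_r,a_r)` for `U(p,q)` (1-based indexing). -/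
structure GoodParam (p q r : ℕ) (t : ℕ → ℤ) (a : ℕ → ℕ) : Prop where
  hr : 1 ≤ r
  hpos : ∀ i ∈ Finset.Icc 1 r, 0 < a i
  hsum : ∑ i ∈ Finset.Icc 1 r, a i = p + q
  heven : ∀ i ∈ Finset.Icc 1 r, Even (t i + (a i : ℤ) + (p : ℤ) + (q : ℤ))
  hdec : ∀ i, 1 ≤ i → i < r → t (i + 1) ≤ t i
  hadec : ∀ i, 1 ≤ i → i < r → t i = t (i + 1) → a (i + 1) ≤ a i

/-- The segment `ν_i = {(t_i − a_i + 1)/2 + k : 0 ≤ k ≤ a_i − 1}` as a multiset of rationals. -/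
def nu (t : ℕ → ℤ) (a : ℕ → ℕ) (i : ℕ) : Multiset ℚ :=
  (Multiset.range (a i)).map (fun k => ((t i : ℚ) - (a i : ℚ) + 1) / 2 + (k : ℚ))

/-- `ν_{<j} = ν_1 ⊔ … ⊔ ν_{j−1}`. -/
def nuLt (t : ℕ → ℤ) (a : ℕ → ℕ) (j : ℕ) : Multiset ℚ :=
  ∑ k ∈ Finset.Icc 1 (j - 1), nu t a k

/-- `ν_{>j} = ν_{j+1} ⊔ … ⊔ ν_r`. -/
def nuGt (t : ℕ → ℤ) (a : ℕ → ℕ) (r j : ℕ) : Multiset ℚ :=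
  ∑ k ∈ Finset.Icc (j + 1) r, nu t a k

/-- `ν = ν_1 ⊔ … ⊔ ν_r`. -/
def nuAll (t : ℕ → ℤ) (a : ℕ → ℕ) (r : ℕ) : Multiset ℚ :=
  ∑ k ∈ Finset.Icc 1 r, nu t a k

/-- `j` is the least index with `a_1 + … + a_j ≥ p`. -/
structure LeastJ (p r : ℕ) (a : ℕ → ℕ) (j : ℕ) : Prop where
  h1 : 1 ≤ j
  hle : j ≤ r
  hge : p ≤ ∑ ℓ ∈ Finset.Icc 1 j, a ℓ
  hmin : ∀ i, i < j → ∑ ℓ ∈ Finset.Icc 1 i, a ℓ < p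

/-- `p_j = p − (a_1 + … + a_{j−1})`. -/
def pj (p : ℕ) (a : ℕ → ℕ) (j : ℕ) : ℕ := p - ∑ ℓ ∈ Finset.Icc 1 (j - 1), a ℓ

/-- `q_j = q − (a_{j+1} + … + a_r)`. -/
def qj (q r : ℕ) (a : ℕ → ℕ) (j : ℕ) : ℕ := q - ∑ ℓ ∈ Finset.Icc (j + 1) r, a ℓ

/-- The nonvanishing condition: `ν_{<j}` and `ν_{>j}` are multiplicity free,
`#(ν_j ∩ ν_{<j}) ≤ q_j` and `#(ν_j ∩ ν_{>j}) ≤ p_j`. -/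
def NonVanishing (p q r : ℕ) (t : ℕ → ℤ) (a : ℕ → ℕ) (j : ℕ) : Prop :=
  (nuLt t a j).Nodup ∧ (nuGt t a r j).Nodup ∧
  Multiset.card ((nu t a j).filter (fun x => x ∈ nuLt t a j)) ≤ qj q r a j ∧
  Multiset.card ((nu t a j).filter (fun x => x ∈ nuGt t a r j)) ≤ pj p a j


section Aux13

lemma mem_nu_iff {t : ℕ → ℤ} {a : ℕ → ℕ} {i : ℕ} {x : ℚ} :
    x ∈ nu t a i ↔ ∃ k : ℕ, k < a i ∧ x = ((t i : ℚ) - (a i : ℚ) + 1) / 2 + k := by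
  rw [nu]
  simp only [Multiset.mem_map, Multiset.mem_range, Functor.map, Multiset.bind,
    Multiset.mem_bind, Multiset.mem_join, bind_pure_comp, Multiset.mem_singleton]
  constructor
  · rintro ⟨y, ⟨k, hk, rfl⟩, h⟩; exact ⟨k, hk, h.symm⟩
  · rintro ⟨k, hk, h⟩; exact ⟨(k : ℚ), ⟨k, hk, rfl⟩, h.symm⟩

lemma nu_bounds {t : ℕ → ℤ} {a : ℕ → ℕ} {i : ℕ} {x : ℚ} (hx : x ∈ nu t a i) :
    ((t i : ℚ) - (a i : ℚ) + 1) / 2 ≤ x ∧ x ≤ ((t i : ℚ) + (a i : ℚ) - 1) / 2 := by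
  obtain ⟨k, hk, rfl⟩ := mem_nu_iff.mp hx
  have h1 : (0:ℚ) ≤ (k:ℚ) := Nat.cast_nonneg k
  have h2 : (k:ℚ) ≤ (a i : ℚ) - 1 := by
    have : (k:ℚ) + 1 ≤ (a i : ℚ) := by exact_mod_cast Nat.succ_le_of_lt hk
    linarith
  constructor <;> linarith

lemma mem_nu_of {t : ℕ → ℤ} {a : ℕ → ℕ} {i : ℕ} {x : ℚ} (m : ℤ)
    (hm : x = ((t i : ℚ) - (a i : ℚ) + 1) / 2 + (m : ℚ)) (h0 : 0 ≤ m)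
    (h1 : x ≤ ((t i : ℚ) + (a i : ℚ) - 1) / 2) : x ∈ nu t a i := by
  have hc : ((m.toNat : ℕ) : ℚ) = (m : ℚ) := by
    exact_mod_cast congrArg (fun z : ℤ => (z : ℚ)) (Int.toNat_of_nonneg h0)
  refine mem_nu_iff.mpr ⟨m.toNat, ?_, by rw [hm, hc]⟩
  have h2 : (m : ℚ) ≤ (a i : ℚ) - 1 := by rw [hm] at h1; linarith
  have h3 : (m : ℚ) + 1 ≤ ((a i : ℤ) : ℚ) := by push_cast; linarith
  have h4 : m + 1 ≤ (a i : ℤ) := by exact_mod_cast h3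
  omega

lemma nu_coset {p q r : ℕ} {t : ℕ → ℤ} {a : ℕ → ℕ} (hgp : GoodParam p q r t a)
    {k j : ℕ} (hk : k ∈ Finset.Icc 1 r) (hjm : j ∈ Finset.Icc 1 r) {x : ℚ}
    (hx : x ∈ nu t a k) : ∃ m : ℤ, x = ((t j : ℚ) - (a j : ℚ) + 1) / 2 + (m : ℚ) := by
  obtain ⟨e, he, rfl⟩ := mem_nu_iff.mp hx
  obtain ⟨u, hu⟩ := hgp.heven k hk
  obtain ⟨v, hv⟩ := hgp.heven j hjm
  refine ⟨u - v - (a k : ℤ) + (a j : ℤ) + (e : ℤ), ?_⟩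
  have hu' : ((t k : ℚ)) + (a k : ℚ) + (p : ℚ) + (q : ℚ) = (u : ℚ) + (u : ℚ) := by
    exact_mod_cast congrArg (fun z : ℤ => (z : ℚ)) hu
  have hv' : ((t j : ℚ)) + (a j : ℚ) + (p : ℚ) + (q : ℚ) = (v : ℚ) + (v : ℚ) := by
    exact_mod_cast congrArg (fun z : ℤ => (z : ℚ)) hv
  push_cast
  linarith

lemma t_anti {p q r : ℕ} {t : ℕ → ℤ} {a : ℕ → ℕ} (hgp : GoodParam p q r t a)
    {i : ℕ} (h1 : 1 ≤ i) : ∀ k, i ≤ k → k ≤ r → t k ≤ t i := by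
  intro k
  induction k with
  | zero => intro h _; omega
  | succ n ih =>
    intro hik hkr
    rcases Nat.eq_or_lt_of_le hik with h | h
    · rw [← h]
    · exact le_trans (hgp.hdec n (by omega) (by omega)) (ih (by omega) (by omega))

lemma card_filter_le_of_nodup {s u : Multiset ℚ} (hs : s.Nodup)
    {P : ℚ → Prop} [DecidablePred P] [DecidablePred (fun x : ℚ => x ∈ s)]
    (h : ∀ x ∈ s, P x → x ∈ u) :
    Multiset.card (s.filter P) ≤ Multiset.card (u.filter (fun x => x ∈ s)) := by
  apply Multiset.card_le_card
  rw [Multiset.le_iff_count]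
  intro x
  by_cases hx : x ∈ s.filter P
  · have hxs : x ∈ s := Multiset.mem_of_mem_filter hx
    have hxp : P x := Multiset.of_mem_filter hx
    have h1 : (s.filter P).count x ≤ 1 :=
      Multiset.nodup_iff_count_le_one.mp (hs.filter P) x
    have h2 : 0 < (u.filter (fun x => x ∈ s)).count x :=
      Multiset.count_pos.mpr (Multiset.mem_filter.mpr ⟨h x hxs hxp, hxs⟩)
    omega
  · rw [Multiset.count_eq_zero_of_notMem hx]
    exact Nat.zero_le _

lemma card_msum {ι : Type*} (s : Finset ι) (f : ι → Multiset ℚ) :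
    Multiset.card (∑ i ∈ s, f i) = ∑ i ∈ s, Multiset.card (f i) := by
  classical
  induction s using Finset.induction_on with
  | empty => simp
  | @insert b s' hb ih => rw [Finset.sum_insert hb, Finset.sum_insert hb,
      Multiset.card_add, ih]

lemma sum_split (a : ℕ → ℕ) {j r : ℕ} (h1 : 1 ≤ j) (hjr : j ≤ r) :
    ∑ ℓ ∈ Finset.Icc 1 r, a ℓ
      = (∑ ℓ ∈ Finset.Icc 1 (j-1), a ℓ) + a j + ∑ ℓ ∈ Finset.Icc (j+1) r, a ℓ := by
  have e1 : Finset.Icc 1 r = Finset.Ioc 0 r := by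
    ext x; simp [Finset.mem_Icc, Finset.mem_Ioc]; omega
  have e2 : Finset.Icc 1 (j-1) = Finset.Ioc 0 (j-1) := by
    ext x; simp [Finset.mem_Icc, Finset.mem_Ioc]; omega
  have e3 : Finset.Icc (j+1) r = Finset.Ioc j r := by
    ext x; simp [Finset.mem_Icc, Finset.mem_Ioc]
  have e4 : Finset.Ioc (j-1) j = {j} := by
    ext x; simp [Finset.mem_Ioc]; omega
  rw [e1, e2, e3,
    ← Finset.sum_Ioc_consecutive a (Nat.zero_le (j-1)) (show j - 1 ≤ r by omega),
    ← Finset.sum_Ioc_consecutive a (show j - 1 ≤ j by omega) hjr, e4,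
    Finset.sum_singleton]
  ring

lemma nat_ivt (g : ℕ → ℕ) (n P : ℕ) (hn : 1 ≤ n) (h1 : P ≤ g 1) (h2 : g n ≤ P)
    (hstep : ∀ i, 1 ≤ i → i < n → g i ≤ g (i+1) + 1) :
    ∃ i, 1 ≤ i ∧ i ≤ n ∧ g i = P := by
  by_contra hc
  push_neg at hc
  have key : ∀ i, 1 ≤ i → i ≤ n → P < g i := by
    intro i
    induction i with
    | zero => omega
    | succ m ih =>
      intro _ hin
      have hne := hc (m+1) (by omega) hin
      rcases Nat.eq_zero_or_pos m with hm | hm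
      · subst hm; simp only [Nat.zero_add] at hne ⊢; omega
      · have h3 := ih hm (by omega)
        have h4 := hstep m hm (by omega)
        omega
  have := key n hn le_rfl
  omega

end Aux13

/-- if `#(ν_j ∩ ν_{<j}) < q_j` and `#(ν_j ∩ ν_{>j}) < p_j`, then there is
`1 ≤ i_0 ≤ a_j` with `a_j − i_0 + 1 + #{x ∈ ν_{<j} ⊔ ν_{>j} : x > ν_{j,i_0}} = p`, where
`ν_{j,i} = (t_j + a_j − 1)/2 − (i − 1)` is the `i`-th largest element of `ν_j`. -/
theorem statement13 (p q r j : ℕ) (hp : 1 ≤ p) (hq : 1 ≤ q) (t : ℕ → ℤ) (a : ℕ → ℕ)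
    (hgp : GoodParam p q r t a) (hj : LeastJ p r a j)
    (hnv : NonVanishing p q r t a j)
    (hltstrict : Multiset.card ((nu t a j).filter (fun x => x ∈ nuLt t a j)) < qj q r a j)
    (hgtstrict : Multiset.card ((nu t a j).filter (fun x => x ∈ nuGt t a r j)) < pj p a j) :
    ∃ i0 : ℕ, 1 ≤ i0 ∧ i0 ≤ a j ∧
      a j - i0 + 1 + Multiset.card ((nuLt t a j + nuGt t a r j).filter
        (fun x => ((t j : ℚ) + (a j : ℚ) - 1) / 2 - ((i0 : ℚ) - 1) < x)) = p := by
  classical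
  obtain ⟨hLnd, hGnd, -, -⟩ := hnv
  have hj1 := hj.h1
  have hjle := hj.hle
  have hjmem : j ∈ Finset.Icc 1 r := Finset.mem_Icc.mpr ⟨hj.h1, hj.hle⟩
  have haj : 0 < a j := hgp.hpos j hjmem
  -- arithmetic bookkeeping
  have hsplit := sum_split a hj.h1 hj.hle
  have hAp : ∑ ℓ ∈ Finset.Icc 1 (j-1), a ℓ < p :=
    hj.hmin (j-1) (by have := hj.h1; omega)
  have hsplitj : ∑ ℓ ∈ Finset.Icc 1 j, a ℓ
      = (∑ ℓ ∈ Finset.Icc 1 (j-1), a ℓ) + a j := by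
    have h2 := sum_split a hj.h1 (le_refl j)
    rwa [Finset.Icc_eq_empty (show ¬ j + 1 ≤ j by omega), Finset.sum_empty,
      Nat.add_zero] at h2
  have hge' : p ≤ (∑ ℓ ∈ Finset.Icc 1 (j-1), a ℓ) + a j := by
    have := hj.hge; omega
  have htot : (∑ ℓ ∈ Finset.Icc 1 (j-1), a ℓ) + a j
      + (∑ ℓ ∈ Finset.Icc (j+1) r, a ℓ) = p + q := by
    rw [← hsplit]; exact hgp.hsum
  have hpjd : pj p a j = p - ∑ ℓ ∈ Finset.Icc 1 (j-1), a ℓ := rfl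
  have hqjd : qj q r a j = q - ∑ ℓ ∈ Finset.Icc (j+1) r, a ℓ := rfl
  have hPj : pj p a j + (∑ ℓ ∈ Finset.Icc 1 (j-1), a ℓ) = p := by omega
  have hQj : qj q r a j + (∑ ℓ ∈ Finset.Icc (j+1) r, a ℓ) = q := by omega
  have hajeq : pj p a j + qj q r a j = a j := by omega
  have hcardnuj : Multiset.card (nu t a j) = a j := by
    rw [nu]; simp
  have hcardL : Multiset.card (nuLt t a j) = ∑ ℓ ∈ Finset.Icc 1 (j-1), a ℓ := by
    rw [nuLt, card_msum]
    exact Finset.sum_congr rfl fun k _ => by rw [nu]; simp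
  -- all elements of nu_{<j} are ≥ bot
  have hLge : ∀ x ∈ nuLt t a j, ((t j : ℚ) - (a j : ℚ) + 1) / 2 ≤ x := by
    intro x hxL
    by_contra hxbot
    push_neg at hxbot
    obtain ⟨k, hkmem, hxk⟩ := Multiset.mem_sum.mp hxL
    rw [Finset.mem_Icc] at hkmem
    have hkr : k ∈ Finset.Icc 1 r := Finset.mem_Icc.mpr ⟨hkmem.1, by omega⟩
    have htk : (t j : ℚ) ≤ (t k : ℚ) := by
      exact_mod_cast t_anti hgp hkmem.1 j (by omega) hj.hle
    have hxb := nu_bounds hxk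
    have hsub : ∀ y ∈ nu t a j, y ∈ nuLt t a j := by
      intro y hy
      obtain ⟨m, hm⟩ := nu_coset hgp hjmem hkr hy
      have hyb := nu_bounds hy
      refine Multiset.mem_sum.mpr ⟨k, Finset.mem_Icc.mpr hkmem, ?_⟩
      apply mem_nu_of m hm
      · have h0q : (0:ℚ) < (m:ℚ) := by linarith [hyb.1, hxb.1, hm]
        exact_mod_cast h0q.le
      · -- y ≤ top_k since top_j < top_k
        linarith [hyb.2, hxb.1]
    have heq : (nu t a j).filter (fun x => x ∈ nuLt t a j) = nu t a j :=
      Multiset.filter_eq_self.mpr hsub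
    have hcontra := hltstrict
    rw [heq, hcardnuj, hqjd] at hcontra
    omega
  -- all elements of nu_{>j} are ≤ top
  have hGle : ∀ x ∈ nuGt t a r j, x ≤ ((t j : ℚ) + (a j : ℚ) - 1) / 2 := by
    intro x hxG
    by_contra hxtop
    push_neg at hxtop
    obtain ⟨k, hkmem, hxk⟩ := Multiset.mem_sum.mp hxG
    rw [Finset.mem_Icc] at hkmem
    have hkr : k ∈ Finset.Icc 1 r := Finset.mem_Icc.mpr ⟨by omega, hkmem.2⟩
    have htk : (t k : ℚ) ≤ (t j : ℚ) := by
      exact_mod_cast t_anti hgp hj.h1 k (by omega) hkmem.2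
    have hxb := nu_bounds hxk
    have hsub : ∀ y ∈ nu t a j, y ∈ nuGt t a r j := by
      intro y hy
      obtain ⟨m, hm⟩ := nu_coset hgp hjmem hkr hy
      have hyb := nu_bounds hy
      refine Multiset.mem_sum.mpr ⟨k, Finset.mem_Icc.mpr hkmem, ?_⟩
      apply mem_nu_of m hm
      · have h0q : (0:ℚ) < (m:ℚ) := by linarith [hyb.1, hxb.1, hxb.2, hm]
        exact_mod_cast h0q.le
      · linarith [hyb.2, hxb.2]
    have heq : (nu t a j).filter (fun x => x ∈ nuGt t a r j) = nu t a j :=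
      Multiset.filter_eq_self.mpr hsub
    have hcontra := hgtstrict
    rw [heq, hcardnuj, hpjd] at hcontra
    omega
  -- apply discrete intermediate value theorem
  have main : ∃ i, 1 ≤ i ∧ i ≤ a j ∧
      (fun i : ℕ => a j - i + 1 + Multiset.card ((nuLt t a j + nuGt t a r j).filter
        (fun x => ((t j : ℚ) + (a j : ℚ) - 1) / 2 - ((i : ℚ) - 1) < x))) i = p := by
    apply nat_ivt _ _ _ haj
    · -- p ≤ g 1
      show p ≤ a j - 1 + 1 + Multiset.card ((nuLt t a j + nuGt t a r j).filter
        (fun x => ((t j : ℚ) + (a j : ℚ) - 1) / 2 - (((1:ℕ) : ℚ) - 1) < x))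
      rw [Multiset.filter_add, Multiset.card_add]
      have hsplitL := congrArg Multiset.card
        (Multiset.filter_add_not
          (fun x : ℚ => ((t j : ℚ) + (a j : ℚ) - 1) / 2 - (((1:ℕ) : ℚ) - 1) < x)
          (nuLt t a j))
      rw [Multiset.card_add] at hsplitL
      have hnot : Multiset.card ((nuLt t a j).filter
          (fun x : ℚ => ¬ ((t j : ℚ) + (a j : ℚ) - 1) / 2 - (((1:ℕ) : ℚ) - 1) < x))
          < qj q r a j := by
        refine lt_of_le_of_lt (card_filter_le_of_nodup hLnd ?_) hltstrict
        intro x hxL hxP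
        push_neg at hxP
        push_cast at hxP
        obtain ⟨k, hkmem, hxk⟩ := Multiset.mem_sum.mp hxL
        rw [Finset.mem_Icc] at hkmem
        have hkr : k ∈ Finset.Icc 1 r := Finset.mem_Icc.mpr ⟨hkmem.1, by omega⟩
        obtain ⟨m, hm⟩ := nu_coset hgp hkr hjmem hxk
        have hge := hLge x hxL
        apply mem_nu_of m hm
        · have h0q : (0:ℚ) ≤ (m:ℚ) := by linarith [hge, hm]
          exact_mod_cast h0q
        · linarith [hxP]
      have hnot' := hnot
      rw [hqjd] at hnot'
      omega
    · -- g (a j) ≤ p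
      show a j - a j + 1 + Multiset.card ((nuLt t a j + nuGt t a r j).filter
        (fun x => ((t j : ℚ) + (a j : ℚ) - 1) / 2 - (((a j : ℕ) : ℚ) - 1) < x)) ≤ p
      rw [Multiset.filter_add, Multiset.card_add]
      have hLc : Multiset.card ((nuLt t a j).filter
          (fun x : ℚ => ((t j : ℚ) + (a j : ℚ) - 1) / 2 - (((a j : ℕ) : ℚ) - 1) < x))
          ≤ Multiset.card (nuLt t a j) :=
        Multiset.card_le_card (Multiset.filter_le _ _)
      have hGc : Multiset.card ((nuGt t a r j).filter
          (fun x : ℚ => ((t j : ℚ) + (a j : ℚ) - 1) / 2 - (((a j : ℕ) : ℚ) - 1) < x))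
          < pj p a j := by
        refine lt_of_le_of_lt (card_filter_le_of_nodup hGnd ?_) hgtstrict
        intro x hxG hxP
        obtain ⟨k, hkmem, hxk⟩ := Multiset.mem_sum.mp hxG
        rw [Finset.mem_Icc] at hkmem
        have hkr : k ∈ Finset.Icc 1 r := Finset.mem_Icc.mpr ⟨by omega, hkmem.2⟩
        obtain ⟨m, hm⟩ := nu_coset hgp hkr hjmem hxk
        have hle := hGle x hxG
        apply mem_nu_of m hm
        · have h0q : (0:ℚ) < (m:ℚ) := by linarith [hxP, hm]
          exact_mod_cast h0q.le
        · exact hle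
      have hGc' := hGc
      rw [hpjd] at hGc'
      omega
    · -- step
      intro i h1 h2
      show a j - i + 1 + Multiset.card ((nuLt t a j + nuGt t a r j).filter
          (fun x => ((t j : ℚ) + (a j : ℚ) - 1) / 2 - ((i : ℚ) - 1) < x))
        ≤ a j - (i+1) + 1 + Multiset.card ((nuLt t a j + nuGt t a r j).filter
          (fun x => ((t j : ℚ) + (a j : ℚ) - 1) / 2 - (((i+1 : ℕ) : ℚ) - 1) < x)) + 1
      have hmono : Multiset.card ((nuLt t a j + nuGt t a r j).filter
          (fun x => ((t j : ℚ) + (a j : ℚ) - 1) / 2 - ((i : ℚ) - 1) < x))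
          ≤ Multiset.card ((nuLt t a j + nuGt t a r j).filter
          (fun x => ((t j : ℚ) + (a j : ℚ) - 1) / 2 - (((i+1 : ℕ) : ℚ) - 1) < x)) := by
        apply Multiset.card_le_card
        apply Multiset.monotone_filter_right
        intro x hx
        push_cast at hx ⊢
        linarith
      omega
  obtain ⟨i0, hi1, hi2, hi3⟩ := main
  exact ⟨i0, hi1, hi2, hi3⟩
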